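/- Let (Ω, 𝓐, P) be a probability space with a filtration (𝓕_s)_{s∈ℕ}, let L ≥ 0 and M ≥ 0 be real constants, and set Γ = 1 + L·M. Fix natural numbers t and T with 1 ≤ t < T and an integer N ≥ 2. For each i ∈ {2,…,N} let (dⁱ_s)_{t ≤ s ≤ T} be a nonnegative, integrable process adapted to (𝓕_s), and for each s with t ≤ s < T let Aⁱ_s be an event belonging to 𝓕_{s+1}, such that P-almost surely: (a) dⁱ_{s+1} ≤ dⁱ_s + M·1_{Aⁱ_s}, and (b) P(Aⁱ_s | 𝓕_s) ≤ L·dⁱ_s. Define S_s = ∑_{i=2}^{N} dⁱ_s for t ≤ s ≤ T. Then P-almost surely E[S_T | 𝓕_t] ≤ Γ^{T−t}·S_t. -/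

import Mathlib

/-!
Conditioning on `𝓕_s`, the pathwise bound (a) and the conditional bound (b) give
`E[S_{s+1} | 𝓕_s] ≤ S_s + M·L·S_s = Γ·S_s`. Since `Γ ≥ 0`, the tower property iterates this
one-step bound from `s = t` up to `T`.
-/

open MeasureTheory

namespace MeasureTheory

variable {Ω : Type*} {m m₀ : MeasurableSpace Ω} {μ : Measure Ω}

theorem condExp_finsetSum_le {ι : Type*} {s : Finset ι} {f g : ι → Ω → ℝ}
    (hf : ∀ i ∈ s, Integrable (f i) μ) (hfg : ∀ i ∈ s, μ[f i | m] ≤ᵐ[μ] g i) :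
    μ[∑ i ∈ s, f i | m] ≤ᵐ[μ] ∑ i ∈ s, g i := by
  filter_upwards [condExp_finsetSum hf m, (Filter.eventually_all_finset s).2 hfg] with ω hsum hle
  simpa only [hsum, Finset.sum_apply] using Finset.sum_le_sum hle

theorem condExp_le_one_add_mul_of_le_add_mul (hm : m ≤ m₀) [SigmaFinite (μ.trim hm)]
    {f g h : Ω → ℝ} {L M : ℝ} (hM : 0 ≤ M) (hg_meas : StronglyMeasurable[m] g)
    (hf : Integrable f μ) (hg : Integrable g μ) (hh : Integrable h μ)
    (hfgh : f ≤ᵐ[μ] g + M • h) (hh_cond : μ[h | m] ≤ᵐ[μ] L • g) :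
    μ[f | m] ≤ᵐ[μ] (1 + L * M) • g := by
  have hcond : μ[g + M • h | m] =ᵐ[μ] g + M • μ[h | m] := by
    filter_upwards [condExp_add hg (hh.smul M) m, condExp_smul M h m] with ω hadd hsmul
    rw [hadd, Pi.add_apply, hsmul, condExp_of_stronglyMeasurable hm hg_meas hg]
    rfl
  filter_upwards [condExp_mono hf (hg.add (hh.smul M)) hfgh, hcond, hh_cond]
    with ω hmono hcond hh_cond
  rw [hcond] at hmono
  simp only [Pi.add_apply, Pi.smul_apply, smul_eq_mul] at hmono hh_cond ⊢
  nlinarith [mul_le_mul_of_nonneg_left hh_cond hM]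

theorem condExp_le_pow_mul_of_condExp_succ_le {ℱ : Filtration ℕ m₀} [SigmaFiniteFiltration μ ℱ]
    {X : ℕ → Ω → ℝ} {Γ : ℝ} (hΓ : 0 ≤ Γ) {t T : ℕ} (htT : t ≤ T)
    (hX_meas : StronglyMeasurable[ℱ t] (X t))
    (hX_int : ∀ s, t ≤ s → s ≤ T → Integrable (X s) μ)
    (hstep : ∀ s, t ≤ s → s < T → μ[X (s + 1) | ℱ s] ≤ᵐ[μ] Γ • X s) :
    μ[X T | ℱ t] ≤ᵐ[μ] Γ ^ (T - t) • X t := by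
  induction T, htT using Nat.le_induction with
  | base =>
    rw [Nat.sub_self, pow_zero, one_smul,
      condExp_of_stronglyMeasurable (ℱ.le t) hX_meas (hX_int t le_rfl le_rfl)]
  | succ u htu ih =>
    have hu_int := hX_int u htu u.le_succ
    calc μ[X (u + 1) | ℱ t]
        =ᵐ[μ] μ[μ[X (u + 1) | ℱ u] | ℱ t] := (condExp_condExp_of_le (ℱ.mono htu) (ℱ.le u)).symm
      _ ≤ᵐ[μ] μ[Γ • X u | ℱ t] :=
        condExp_mono integrable_condExp (hu_int.smul Γ) (hstep u htu u.lt_succ_self)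
      _ =ᵐ[μ] Γ • μ[X u | ℱ t] := condExp_smul Γ (X u) _
      _ ≤ᵐ[μ] Γ • Γ ^ (u - t) • X t := by
        filter_upwards [ih (fun s hs hsu => hX_int s hs (by omega))
          (fun s hs hsu => hstep s hs (by omega))] with ω hω
        exact mul_le_mul_of_nonneg_left hω hΓ
      _ = Γ ^ (u + 1 - t) • X t := by
        rw [smul_smul, ← pow_succ', Nat.sub_add_comm htu]

end MeasureTheory

theorem expectation_bound_of_final_consistency_general
    {Ω : Type*} {𝓐 : MeasurableSpace Ω} {P : Measure Ω} [IsProbabilityMeasure P]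
    (ℱ : Filtration ℕ 𝓐)
    (L M : ℝ) (hL : 0 ≤ L) (hM : 0 ≤ M)
    (Γ : ℝ) (hΓ : Γ = 1 + L * M)
    (t T : ℕ) (htT : t < T)
    (N : ℕ)
    (d : ℕ → ℕ → Ω → ℝ) (A : ℕ → ℕ → Set Ω)
    (hd_meas : ∀ i ∈ Finset.Icc 2 N, ∀ s, t ≤ s → s ≤ T → StronglyMeasurable[ℱ s] (d i s))
    (hd_int : ∀ i ∈ Finset.Icc 2 N, ∀ s, t ≤ s → s ≤ T → Integrable (d i s) P)
    (hA_meas : ∀ i ∈ Finset.Icc 2 N, ∀ s, t ≤ s → s < T → MeasurableSet[ℱ (s + 1)] (A i s))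
    (hbounded : ∀ i ∈ Finset.Icc 2 N, ∀ s, t ≤ s → s < T →
      ∀ᵐ ω ∂P, d i (s + 1) ω ≤ d i s ω + M * (A i s).indicator (fun _ => (1 : ℝ)) ω)
    (hlip : ∀ i ∈ Finset.Icc 2 N, ∀ s, t ≤ s → s < T →
      P[(A i s).indicator (fun _ => (1 : ℝ)) | ℱ s] ≤ᵐ[P] fun ω => L * d i s ω)
    (S : ℕ → Ω → ℝ) (hS : ∀ s, S s = fun ω => ∑ i ∈ Finset.Icc 2 N, d i s ω) :
    P[S T | ℱ t] ≤ᵐ[P] fun ω => Γ ^ (T - t) * S t ω := by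
  subst hΓ
  obtain rfl : S = fun s => ∑ i ∈ Finset.Icc 2 N, d i s :=
    funext fun s => (hS s).trans (Finset.sum_fn _ _).symm
  have hS_int : ∀ s, t ≤ s → s ≤ T → Integrable (∑ i ∈ Finset.Icc 2 N, d i s) P :=
    fun s hts hsT => integrable_finsetSum' _ fun i hi => hd_int i hi s hts hsT
  have hS_meas : ∀ s, t ≤ s → s ≤ T → StronglyMeasurable[ℱ s] (∑ i ∈ Finset.Icc 2 N, d i s) :=
    fun s hts hsT => Finset.stronglyMeasurable_sum _ fun i hi => hd_meas i hi s hts hsT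
  refine condExp_le_pow_mul_of_condExp_succ_le (by positivity) htT.le
    (hS_meas t le_rfl htT.le) hS_int fun s hts hsT => ?_
  set χ : ℕ → Ω → ℝ := fun i => (A i s).indicator fun _ => 1
  have hχ_int : ∀ i ∈ Finset.Icc 2 N, Integrable (χ i) P := fun i hi =>
    (integrable_const 1).indicator (ℱ.le _ _ (hA_meas i hi s hts hsT))
  refine condExp_le_one_add_mul_of_le_add_mul (ℱ.le s) hM (hS_meas s hts hsT.le)
    (hS_int _ (by omega) hsT) (hS_int s hts hsT.le) (integrable_finsetSum' _ hχ_int) ?_ ?_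
  · filter_upwards [(Filter.eventually_all_finset _).2 fun i hi => hbounded i hi s hts hsT]
      with ω hω
    simpa [Finset.sum_apply, Finset.mul_sum, Finset.sum_add_distrib] using Finset.sum_le_sum hω
  · refine (condExp_finsetSum_le hχ_int fun i hi => hlip i hi s hts hsT).trans ?_
    exact Filter.Eventually.of_forall fun ω => by simp [Finset.mul_sum]

/-- The exponential-growth expectation bound `E[S_T | 𝓕_t] ≤ Γ^(T−t)·S_t` from
the proof of Theorem 1 of the paper. -/
theorem expectation_bound_of_final_consistency
    {Ω : Type*} {𝓐 : MeasurableSpace Ω} {P : Measure Ω} [IsProbabilityMeasure P]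
    (ℱ : Filtration ℕ 𝓐)
    (L M : ℝ) (hL : 0 ≤ L) (hM : 0 ≤ M)
    (Γ : ℝ) (hΓ : Γ = 1 + L * M)
    (t T : ℕ) (ht : 1 ≤ t) (htT : t < T)
    (N : ℕ) (hN : 2 ≤ N)
    (d : ℕ → ℕ → Ω → ℝ) (A : ℕ → ℕ → Set Ω)
    (hd_meas : ∀ i ∈ Finset.Icc 2 N, ∀ s, t ≤ s → s ≤ T → StronglyMeasurable[ℱ s] (d i s))
    (hd_nonneg : ∀ i ∈ Finset.Icc 2 N, ∀ s, t ≤ s → s ≤ T → 0 ≤ᵐ[P] d i s)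
    (hd_int : ∀ i ∈ Finset.Icc 2 N, ∀ s, t ≤ s → s ≤ T → Integrable (d i s) P)
    (hA_meas : ∀ i ∈ Finset.Icc 2 N, ∀ s, t ≤ s → s < T → MeasurableSet[ℱ (s + 1)] (A i s))
    (hbounded : ∀ i ∈ Finset.Icc 2 N, ∀ s, t ≤ s → s < T →
      ∀ᵐ ω ∂P, d i (s + 1) ω ≤ d i s ω + M * (A i s).indicator (fun _ => (1 : ℝ)) ω)
    (hlip : ∀ i ∈ Finset.Icc 2 N, ∀ s, t ≤ s → s < T →
      P[(A i s).indicator (fun _ => (1 : ℝ)) | ℱ s] ≤ᵐ[P] fun ω => L * d i s ω)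
    (S : ℕ → Ω → ℝ) (hS : ∀ s, S s = fun ω => ∑ i ∈ Finset.Icc 2 N, d i s ω) :
    P[S T | ℱ t] ≤ᵐ[P] fun ω => Γ ^ (T - t) * S t ω :=
  expectation_bound_of_final_consistency_general ℱ L M hL hM Γ hΓ t T htT N d A hd_meas hd_int
    hA_meas hbounded hlip S hS
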